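/- Let X be a compact metric space, Y ⊆ X, and y ∈ Y. Define 𝒰_y as the collection of open sets U ⊆ X with y ∈ U and frontier(U) ∩ Y = ∅, and F(y) = ⋂_{U ∈ 𝒰_y} closure(U). Then F(y) is connected. -/

import Mathlib

/-!
If `F(y)` splits as `u ∪ v` with `u, v` disjoint closed and `y ∈ u`, separate `u` and `v` by
disjoint open sets `U ⊇ u`, `V ⊇ v`. The closures of the sets in `𝒰_y` form a downward
directed family of closed sets (`𝒰_y` is stable under finite intersections) with intersection
`F(y) ⊆ U ∪ V`, so by compactness one of them, `closure W`, already lies in `U ∪ V`.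
Then `W ∩ U` is again in `𝒰_y`, since `closure W` misses the frontier of `U`. Hence
`F(y) ⊆ closure U`, which misses `V`, and so `v ∩ F(y) = ∅`.
-/

open Set Topology

/-- `C` is a relatively clopen subset of `Y` (clopen in the subspace `Y`). -/
def RelClopen {α : Type*} [TopologicalSpace α] (Y C : Set α) : Prop :=
  (∃ U : Set α, IsOpen U ∧ C = U ∩ Y) ∧ (∃ F : Set α, IsClosed F ∧ C = F ∩ Y)

/-- `Y` is totally disconnected: any two points of `Y` lie in disjoint relatively
clopen subsets of `Y`. -/
def TotDisconnIn {α : Type*} [TopologicalSpace α] (Y : Set α) : Prop :=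
  ∀ a ∈ Y, ∀ b ∈ Y, a ≠ b → ∃ C : Set α, RelClopen Y C ∧ a ∈ C ∧ b ∉ C

/-- `F(y)`: the intersection of closures of all open sets `U ∋ y` whose
frontier misses `Y`. -/
def Fset {α : Type*} [TopologicalSpace α] (Y : Set α) (y : α) : Set α :=
  ⋂₀ {T | ∃ U : Set α, IsOpen U ∧ y ∈ U ∧ frontier U ∩ Y = ∅ ∧ T = closure U}

section FrontierAvoiding

variable {α : Type*} [TopologicalSpace α] {Y : Set α} {y : α}

/-- The family `𝒰_y`. -/
def frontierAvoidingNhds (Y : Set α) (y : α) : Set (Set α) :=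
  {U | IsOpen U ∧ y ∈ U ∧ frontier U ∩ Y = ∅}

theorem univ_mem_frontierAvoidingNhds : univ ∈ frontierAvoidingNhds Y y :=
  ⟨isOpen_univ, mem_univ y, by simp⟩

theorem inter_mem_frontierAvoidingNhds_of_disjoint {U A : Set α}
    (hU : U ∈ frontierAvoidingNhds Y y) (hA : IsOpen A) (hyA : y ∈ A)
    (hUA : Disjoint (closure U) (frontier A ∩ Y)) :
    U ∩ A ∈ frontierAvoidingNhds Y y := by
  obtain ⟨hUo, hyU, hUY⟩ := hU
  refine ⟨hUo.inter hA, ⟨hyU, hyA⟩, eq_empty_of_forall_notMem ?_⟩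
  rintro x ⟨hx, hxY⟩
  rcases frontier_inter_subset U A hx with ⟨hxU, -⟩ | ⟨hxU, hxA⟩
  · exact eq_empty_iff_forall_notMem.1 hUY x ⟨hxU, hxY⟩
  · exact hUA.notMem_of_mem_left hxU ⟨hxA, hxY⟩

theorem inter_mem_frontierAvoidingNhds {U A : Set α} (hU : U ∈ frontierAvoidingNhds Y y)
    (hA : A ∈ frontierAvoidingNhds Y y) : U ∩ A ∈ frontierAvoidingNhds Y y := by
  refine inter_mem_frontierAvoidingNhds_of_disjoint hU hA.1 hA.2.1 ?_
  rw [hA.2.2]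
  exact disjoint_empty _

theorem Fset_eq_iInter_closure :
    Fset Y y = ⋂ U : frontierAvoidingNhds Y y, closure (U : Set α) := by
  ext x
  simp only [Fset, mem_sInter, mem_ofPred_eq, mem_iInter, Subtype.forall, frontierAvoidingNhds]
  constructor
  · exact fun h U hU => h _ ⟨U, hU.1, hU.2.1, hU.2.2, rfl⟩
  · rintro h _ ⟨U, hUo, hyU, hUY, rfl⟩
    exact h U ⟨hUo, hyU, hUY⟩

theorem Fset_subset_closure {U : Set α} (hU : U ∈ frontierAvoidingNhds Y y) :
    Fset Y y ⊆ closure U := by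
  rw [Fset_eq_iInter_closure]
  exact iInter_subset (fun U : frontierAvoidingNhds Y y => closure (U : Set α)) ⟨U, hU⟩

theorem isClosed_Fset : IsClosed (Fset Y y) := by
  rw [Fset_eq_iInter_closure]
  exact isClosed_iInter fun _ => isClosed_closure

theorem mem_Fset_self : y ∈ Fset Y y := by
  rw [Fset_eq_iInter_closure]
  exact mem_iInter.2 fun U => subset_closure U.2.2.1

theorem exists_closure_subset_of_Fset_subset [CompactSpace α] {O : Set α} (hO : IsOpen O)
    (hFO : Fset Y y ⊆ O) : ∃ U ∈ frontierAvoidingNhds Y y, closure U ⊆ O := by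
  have : Nonempty (frontierAvoidingNhds Y y) := ⟨⟨univ, univ_mem_frontierAvoidingNhds⟩⟩
  have hdir : Directed (· ⊇ ·) fun U : frontierAvoidingNhds Y y => closure (U : Set α) :=
    fun U V => ⟨⟨U ∩ V, inter_mem_frontierAvoidingNhds U.2 V.2⟩,
      closure_mono inter_subset_left, closure_mono inter_subset_right⟩
  rw [Fset_eq_iInter_closure] at hFO
  obtain ⟨U, hU⟩ := exists_subset_nhds_of_compactSpace hdir (fun _ => isClosed_closure)
    fun x hx => hO.mem_nhds (hFO hx)
  exact ⟨U, U.2, hU⟩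

theorem Fset_subset_of_mem_of_subset_union [CompactSpace α] [NormalSpace α] {u v : Set α}
    (hu : IsClosed u) (hv : IsClosed v) (huv : Disjoint u v) (hFuv : Fset Y y ⊆ u ∪ v)
    (hyu : y ∈ u) : Fset Y y ⊆ u := by
  obtain ⟨U, V, hUo, hVo, huU, hvV, hUV⟩ := normal_separation hu hv huv
  obtain ⟨W, hW, hWUV⟩ := exists_closure_subset_of_Fset_subset (hUo.union hVo)
    (hFuv.trans (union_subset_union huU hvV))
  have hclUV : Disjoint (closure U) V := hUV.closure_left hVo
  -- `closure W ⊆ U ∪ V`, while `frontier U` avoids both `U` and `V`.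
  have hWU : Disjoint (closure W) (frontier U ∩ Y) := by
    refine disjoint_left.2 fun x hxW ⟨hxU, _⟩ => ?_
    rw [hUo.frontier_eq] at hxU
    exact (hWUV hxW).elim hxU.2 (disjoint_left.1 hclUV hxU.1)
  have hWU_mem : W ∩ U ∈ frontierAvoidingNhds Y y :=
    inter_mem_frontierAvoidingNhds_of_disjoint hW hUo (huU hyu) hWU
  have hFU : Fset Y y ⊆ closure U :=
    (Fset_subset_closure hWU_mem).trans (closure_mono inter_subset_right)
  exact fun x hx => (hFuv hx).resolve_right fun hxv =>
    disjoint_left.1 hclUV (hFU hx) (hvV hxv)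

theorem isPreconnected_Fset [CompactSpace α] [NormalSpace α] : IsPreconnected (Fset Y y) := by
  rw [isPreconnected_iff_subset_of_fully_disjoint_closed isClosed_Fset]
  intro u v hu hv hFuv huv
  rcases hFuv mem_Fset_self with hyu | hyv
  · exact .inl (Fset_subset_of_mem_of_subset_union hu hv huv hFuv hyu)
  · exact .inr (Fset_subset_of_mem_of_subset_union hv hu huv.symm (union_comm u v ▸ hFuv) hyv)

end FrontierAvoiding

theorem stmt1_general {X : Type*} [MetricSpace X] [CompactSpace X] (Y : Set X)
    (y : X) :
    IsConnected (Fset Y y) :=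
  ⟨⟨y, mem_Fset_self⟩, isPreconnected_Fset⟩

theorem stmt1 {X : Type*} [MetricSpace X] [CompactSpace X] (Y : Set X)
    (y : X) (hy : y ∈ Y) :
    IsConnected (Fset Y y) :=
  stmt1_general Y y
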